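/- The rewrite system WS is locally confluent: its only critical pairs arise from overlaps of the rule t[nil] → t with the homomorphic substitution rules for s, + and ×, namely f(t₁,…,tₖ) ← f(t₁,…,tₖ)[nil] → f(t₁[nil],…,tₖ[nil]), and each of these pairs is joinable. Combined with termination, WS is confluent. -/

import Mathlib

/-- Terms: arithmetic terms (with de Bruijn variables), lists, de Bruijn
indices `1`/`S`, explicit substitution `·[·]`, and class terms. -/
inductive Tm : Type
  | var : ℕ → Tm
  | zero : Tm
  | s : Tm → Tm
  | plus : Tm → Tm → Tm
  | times : Tm → Tm → Tm
  | one : Tm                 -- the index 1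
  | S : Tm → Tm              -- the index successor S
  | sub : Tm → Tm → Tm       -- explicit substitution t[l]
  | nil : Tm
  | cons : Tm → Tm → Tm      -- list cons ::
  | doteq : Tm → Tm → Tm     -- class former ≐ for =
  | cup : Tm → Tm → Tm       -- class former ∪ for ∨
  | cap : Tm → Tm → Tm       -- class former ∩ for ∧
  | sup : Tm → Tm → Tm       -- class former ⊃ for →
  | emptyc : Tm              -- class former ∅ for ⊥
  | Pcl : Tm → Tm            -- class former 𝒫 for ∃
  | Ccl : Tm → Tm            -- class former 𝒞 for ∀

/-- Shifting all de Bruijn variables of a term up by one. -/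
def Tm.shiftT : Tm → Tm
  | .var n => .var (n + 1)
  | .zero => .zero
  | .s t => .s t.shiftT
  | .plus t u => .plus t.shiftT u.shiftT
  | .times t u => .times t.shiftT u.shiftT
  | .one => .one
  | .S t => .S t.shiftT
  | .sub t u => .sub t.shiftT u.shiftT
  | .nil => .nil
  | .cons t u => .cons t.shiftT u.shiftT
  | .doteq t u => .doteq t.shiftT u.shiftT
  | .cup t u => .cup t.shiftT u.shiftT
  | .cap t u => .cap t.shiftT u.shiftT
  | .sup t u => .sup t.shiftT u.shiftT
  | .emptyc => .emptyc
  | .Pcl t => .Pcl t.shiftT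
  | .Ccl t => .Ccl t.shiftT

/-- One step of the term part of the rewrite system WS, applied at any
position. -/
inductive TStep : Tm → Tm → Prop
  | subNil (t : Tm) : TStep (.sub t .nil) t
  | subOne (t l : Tm) : TStep (.sub .one (.cons t l)) t
  | subS (n t l : Tm) : TStep (.sub (.S n) (.cons t l)) (.sub n l)
  | subs (n l : Tm) : TStep (.sub (.s n) l) (.s (.sub n l))
  | subPlus (a b l : Tm) : TStep (.sub (.plus a b) l) (.plus (.sub a l) (.sub b l))
  | subTimes (a b l : Tm) : TStep (.sub (.times a b) l) (.times (.sub a l) (.sub b l))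
  | sC {t t'} : TStep t t' → TStep (.s t) (.s t')
  | SC {t t'} : TStep t t' → TStep (.S t) (.S t')
  | plusL {t t' u} : TStep t t' → TStep (.plus t u) (.plus t' u)
  | plusR {t u u'} : TStep u u' → TStep (.plus t u) (.plus t u')
  | timesL {t t' u} : TStep t t' → TStep (.times t u) (.times t' u)
  | timesR {t u u'} : TStep u u' → TStep (.times t u) (.times t u')
  | subL {t t' u} : TStep t t' → TStep (.sub t u) (.sub t' u)
  | subR {t u u'} : TStep u u' → TStep (.sub t u) (.sub t u')
  | consL {t t' u} : TStep t t' → TStep (.cons t u) (.cons t' u)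
  | consR {t u u'} : TStep u u' → TStep (.cons t u) (.cons t u')
  | doteqL {t t' u} : TStep t t' → TStep (.doteq t u) (.doteq t' u)
  | doteqR {t u u'} : TStep u u' → TStep (.doteq t u) (.doteq t u')
  | cupL {t t' u} : TStep t t' → TStep (.cup t u) (.cup t' u)
  | cupR {t u u'} : TStep u u' → TStep (.cup t u) (.cup t u')
  | capL {t t' u} : TStep t t' → TStep (.cap t u) (.cap t' u)
  | capR {t u u'} : TStep u u' → TStep (.cap t u) (.cap t u')
  | supL {t t' u} : TStep t t' → TStep (.sup t u) (.sup t' u)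
  | supR {t u u'} : TStep u u' → TStep (.sup t u) (.sup t u')
  | PclC {t t'} : TStep t t' → TStep (.Pcl t) (.Pcl t')
  | CclC {t t'} : TStep t t' → TStep (.Ccl t) (.Ccl t')

/-- Formulas: equalities, membership `ε`, and the logical connectives (de
Bruijn binders). -/
inductive Fm : Type
  | eq : Tm → Tm → Fm
  | eps : Tm → Tm → Fm
  | bot : Fm
  | imp : Fm → Fm → Fm
  | and : Fm → Fm → Fm
  | or : Fm → Fm → Fm
  | all : Fm → Fm
  | ex : Fm → Fm

/-- One step of the rewrite system WS on formulas, applied at any position: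
term steps inside atoms, the decoding rules for atoms, and congruence through
the connectives. -/
inductive FStep : Fm → Fm → Prop
  | eqL {t t' u} : TStep t t' → FStep (.eq t u) (.eq t' u)
  | eqR {t u u'} : TStep u u' → FStep (.eq t u) (.eq t u')
  | epsL {t t' u} : TStep t t' → FStep (.eps t u) (.eps t' u)
  | epsR {t u u'} : TStep u u' → FStep (.eps t u) (.eps t u')
  | decEq (l t₁ t₂ : Tm) :
      FStep (.eps l (.doteq t₁ t₂)) (.eq (.sub t₁ l) (.sub t₂ l))
  | decCup (l a b : Tm) : FStep (.eps l (.cup a b)) (.or (.eps l a) (.eps l b))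
  | decCap (l a b : Tm) : FStep (.eps l (.cap a b)) (.and (.eps l a) (.eps l b))
  | decSup (l a b : Tm) : FStep (.eps l (.sup a b)) (.imp (.eps l a) (.eps l b))
  | decEmpty (l : Tm) : FStep (.eps l .emptyc) .bot
  | decP (l a : Tm) :
      FStep (.eps l (.Pcl a)) (.ex (.eps (.cons (.var 0) l.shiftT) a.shiftT))
  | decC (l a : Tm) :
      FStep (.eps l (.Ccl a)) (.all (.eps (.cons (.var 0) l.shiftT) a.shiftT))
  | impL {A A' B} : FStep A A' → FStep (.imp A B) (.imp A' B)
  | impR {A B B'} : FStep B B' → FStep (.imp A B) (.imp A B')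
  | andL {A A' B} : FStep A A' → FStep (.and A B) (.and A' B)
  | andR {A B B'} : FStep B B' → FStep (.and A B) (.and A B')
  | orL {A A' B} : FStep A A' → FStep (.or A B) (.or A' B)
  | orR {A B B'} : FStep B B' → FStep (.or A B) (.or A B')
  | allC {A A'} : FStep A A' → FStep (.all A) (.all A')
  | exC {A A'} : FStep A A' → FStep (.ex A) (.ex A')

/-!
Instead of combining local confluence with termination through Newman's lemma, we compute
normal forms directly. `Tm.norm` pushes every explicit substitution through `s`, `+` and `×`
and resolves it against `nil`, `1` and `S` (this is `Tm.app`, the normal form of `t[l]` for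
normal `t` and `l`); `Fm.norm` moreover unfolds membership `l ε c` in a class term `c` (this is
`decode`). Every term and formula reduces to its `norm`, and a single step never changes `norm`,
so any two reducts of `t` meet in `t.norm`. The critical pairs
`f(t₁,…,tₖ) ← f(t₁,…,tₖ)[nil] → f(t₁[nil],…,tₖ[nil])` close at `f(t₁,…,tₖ)`, by `t[nil] → t`
inside each argument.
-/

open Relation

namespace Relation

variable {α β γ : Type*} {r : α → α → Prop} {p : β → β → Prop} {q : γ → γ → Prop}

theorem ReflTransGen.lift₂ (f : α → β → γ) (hl : ∀ {a a' b}, r a a' → q (f a b) (f a' b))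
    (hr : ∀ {a b b'}, p b b' → q (f a b) (f a b')) {a a' : α} {b b' : β}
    (ha : ReflTransGen r a a') (hb : ReflTransGen p b b') :
    ReflTransGen q (f a b) (f a' b') :=
  (ha.lift (f · b) fun _ _ => hl).trans (hb.lift (f a') fun _ _ => hr)

theorem join_of_normalizer (nf : α → α) (hstep : ∀ {a b}, r a b → nf a = nf b)
    (hred : ∀ a, ReflTransGen r a (nf a)) {a b c : α}
    (hab : ReflTransGen r a b) (hac : ReflTransGen r a c) : Join (ReflTransGen r) b c := by
  have hstar : ∀ {x y}, ReflTransGen r x y → nf x = nf y := fun h =>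
    h.rec rfl fun _ hst ih => ih.trans (hstep hst)
  exact ⟨nf a, hstar hab ▸ hred b, hstar hac ▸ hred c⟩

end Relation

namespace Tm

def size : Tm → ℕ
  | .var _ | .zero | .one | .nil | .emptyc => 1
  | .s t | .S t | .Pcl t | .Ccl t => t.size + 1
  | .plus t u | .times t u | .sub t u | .cons t u | .doteq t u | .cup t u | .cap t u
  | .sup t u => t.size + u.size + 1

theorem size_shiftT (t : Tm) : t.shiftT.size = t.size := by
  induction t <;> simp_all [shiftT, size]

def app : Tm → Tm → Tm
  | t, .nil => t
  | .s n, l => .s (n.app l)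
  | .plus a b, l => .plus (a.app l) (b.app l)
  | .times a b, l => .times (a.app l) (b.app l)
  | .one, .cons t _ => t
  | .S n, .cons _ l => n.app l
  | t, l => .sub t l

@[simp] theorem app_nil (t : Tm) : t.app .nil = t := by
  cases t <;> rfl

@[simp] theorem s_app (n l : Tm) : (Tm.s n).app l = .s (n.app l) := by
  cases l <;> simp [app]

@[simp] theorem plus_app (a b l : Tm) : (Tm.plus a b).app l = .plus (a.app l) (b.app l) := by
  cases l <;> simp [app]

@[simp] theorem times_app (a b l : Tm) : (Tm.times a b).app l = .times (a.app l) (b.app l) := by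
  cases l <;> simp [app]

theorem shiftT_app (t l : Tm) : (t.app l).shiftT = t.shiftT.app l.shiftT := by
  induction t generalizing l <;> cases l <;> simp_all [app, shiftT]

def norm : Tm → Tm
  | .var n => .var n
  | .zero => .zero
  | .s t => .s t.norm
  | .plus t u => .plus t.norm u.norm
  | .times t u => .times t.norm u.norm
  | .one => .one
  | .S t => .S t.norm
  | .sub t u => t.norm.app u.norm
  | .nil => .nil
  | .cons t u => .cons t.norm u.norm
  | .doteq t u => .doteq t.norm u.norm
  | .cup t u => .cup t.norm u.norm
  | .cap t u => .cap t.norm u.norm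
  | .sup t u => .sup t.norm u.norm
  | .emptyc => .emptyc
  | .Pcl t => .Pcl t.norm
  | .Ccl t => .Ccl t.norm

theorem norm_shiftT (t : Tm) : t.shiftT.norm = t.norm.shiftT := by
  induction t <;> simp_all [norm, shiftT, shiftT_app]

end Tm

namespace TStep

theorem reflTransGen_sub_app (t l : Tm) : ReflTransGen TStep (.sub t l) (t.app l) := by
  fun_induction Tm.app t l with
  | case1 t => exact .single (.subNil t)
  | case2 n l _ ih => exact .head (.subs n l) (ih.lift Tm.s fun _ _ => sC)
  | case3 a b l _ iha ihb => exact .head (.subPlus a b l) (.lift₂ Tm.plus plusL plusR iha ihb)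
  | case4 a b l _ iha ihb =>
    exact .head (.subTimes a b l) (.lift₂ Tm.times timesL timesR iha ihb)
  | case5 t l => exact .single (.subOne t l)
  | case6 n t l ih => exact .head (.subS n t l) ih
  | case7 => exact .refl

theorem reflTransGen_norm (t : Tm) : ReflTransGen TStep t t.norm := by
  induction t with
  | var | zero | one | nil | emptyc => exact .refl
  | s _ ih => exact ih.lift Tm.s fun _ _ => sC
  | S _ ih => exact ih.lift Tm.S fun _ _ => SC
  | Pcl _ ih => exact ih.lift Tm.Pcl fun _ _ => PclC
  | Ccl _ ih => exact ih.lift Tm.Ccl fun _ _ => CclC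
  | plus _ _ iha ihb => exact .lift₂ Tm.plus plusL plusR iha ihb
  | times _ _ iha ihb => exact .lift₂ Tm.times timesL timesR iha ihb
  | cons _ _ iha ihb => exact .lift₂ Tm.cons consL consR iha ihb
  | doteq _ _ iha ihb => exact .lift₂ Tm.doteq doteqL doteqR iha ihb
  | cup _ _ iha ihb => exact .lift₂ Tm.cup cupL cupR iha ihb
  | cap _ _ iha ihb => exact .lift₂ Tm.cap capL capR iha ihb
  | sup _ _ iha ihb => exact .lift₂ Tm.sup supL supR iha ihb
  | sub _ _ iha ihl =>
    exact (ReflTransGen.lift₂ Tm.sub subL subR iha ihl).trans (reflTransGen_sub_app _ _)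

theorem norm_eq {t u : Tm} (h : TStep t u) : t.norm = u.norm := by
  induction h <;> simp_all [Tm.norm, Tm.app]

end TStep

def decode : Tm → Tm → Fm
  | l, .doteq a b => .eq (a.app l) (b.app l)
  | l, .cup a b => .or (decode l a) (decode l b)
  | l, .cap a b => .and (decode l a) (decode l b)
  | l, .sup a b => .imp (decode l a) (decode l b)
  | _, .emptyc => .bot
  | l, .Pcl a => .ex (decode (.cons (.var 0) l.shiftT) a.shiftT)
  | l, .Ccl a => .all (decode (.cons (.var 0) l.shiftT) a.shiftT)
  | l, c => .eps l c
termination_by _ c => c.size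
decreasing_by all_goals simp only [Tm.size, Tm.size_shiftT]; omega

def Fm.norm : Fm → Fm
  | .eq t u => .eq t.norm u.norm
  | .eps l c => decode l.norm c.norm
  | .bot => .bot
  | .imp A B => .imp A.norm B.norm
  | .and A B => .and A.norm B.norm
  | .or A B => .or A.norm B.norm
  | .all A => .all A.norm
  | .ex A => .ex A.norm

namespace FStep

theorem reflTransGen_decode (l c : Tm) : ReflTransGen FStep (.eps l c) (decode l c) := by
  fun_induction decode l c with
  | case1 l a b =>
    exact .head (FStep.decEq l a b)
      (.lift₂ Fm.eq eqL eqR (TStep.reflTransGen_sub_app a l) (TStep.reflTransGen_sub_app b l))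
  | case2 l a b iha ihb => exact .head (FStep.decCup l a b) (.lift₂ Fm.or orL orR iha ihb)
  | case3 l a b iha ihb => exact .head (FStep.decCap l a b) (.lift₂ Fm.and andL andR iha ihb)
  | case4 l a b iha ihb => exact .head (FStep.decSup l a b) (.lift₂ Fm.imp impL impR iha ihb)
  | case5 l => exact .single (FStep.decEmpty l)
  | case6 l a ih => exact .head (FStep.decP l a) (ih.lift Fm.ex fun _ _ => exC)
  | case7 l a ih => exact .head (FStep.decC l a) (ih.lift Fm.all fun _ _ => allC)
  | case8 => exact .refl

theorem reflTransGen_norm (A : Fm) : ReflTransGen FStep A A.norm := by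
  induction A with
  | bot => exact .refl
  | eq t u => exact .lift₂ Fm.eq eqL eqR (TStep.reflTransGen_norm t) (TStep.reflTransGen_norm u)
  | eps l c =>
    exact (ReflTransGen.lift₂ Fm.eps epsL epsR (TStep.reflTransGen_norm l)
      (TStep.reflTransGen_norm c)).trans (reflTransGen_decode _ _)
  | imp _ _ ihA ihB => exact .lift₂ Fm.imp impL impR ihA ihB
  | and _ _ ihA ihB => exact .lift₂ Fm.and andL andR ihA ihB
  | or _ _ ihA ihB => exact .lift₂ Fm.or orL orR ihA ihB
  | all _ ih => exact ih.lift Fm.all fun _ _ => allC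
  | ex _ ih => exact ih.lift Fm.ex fun _ _ => exC

theorem norm_eq {A B : Fm} (h : FStep A B) : A.norm = B.norm := by
  induction h with
  | eqL h | eqR h | epsL h | epsR h => simp only [Fm.norm, h.norm_eq]
  | _ => simp_all [Fm.norm, Tm.norm, decode, Tm.norm_shiftT]

end FStep

/-- The rewrite system WS is locally confluent; its critical pairs, coming from
the overlap of `t[nil] → t` with the homomorphic substitution rules for `s`,
`+` and `×`, are joinable; and, combined with termination, WS is confluent. -/
theorem stmt_17 :
    -- local confluence on terms
    (∀ t u v : Tm, TStep t u → TStep t v →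
      ∃ w, Relation.ReflTransGen TStep u w ∧ Relation.ReflTransGen TStep v w) ∧
    -- local confluence on formulas
    (∀ A B C : Fm, FStep A B → FStep A C →
      ∃ D, Relation.ReflTransGen FStep B D ∧ Relation.ReflTransGen FStep C D) ∧
    -- joinability of the critical pair for s
    (∀ t : Tm, ∃ w, Relation.ReflTransGen TStep (.s t) w ∧
      Relation.ReflTransGen TStep (.s (.sub t .nil)) w) ∧
    -- joinability of the critical pair for +
    (∀ t u : Tm, ∃ w, Relation.ReflTransGen TStep (.plus t u) w ∧
      Relation.ReflTransGen TStep (.plus (.sub t .nil) (.sub u .nil)) w) ∧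
    -- joinability of the critical pair for ×
    (∀ t u : Tm, ∃ w, Relation.ReflTransGen TStep (.times t u) w ∧
      Relation.ReflTransGen TStep (.times (.sub t .nil) (.sub u .nil)) w) ∧
    -- confluence on terms
    (∀ t u v : Tm, Relation.ReflTransGen TStep t u → Relation.ReflTransGen TStep t v →
      ∃ w, Relation.ReflTransGen TStep u w ∧ Relation.ReflTransGen TStep v w) ∧
    -- confluence on formulas
    (∀ A B C : Fm, Relation.ReflTransGen FStep A B → Relation.ReflTransGen FStep A C →
      ∃ D, Relation.ReflTransGen FStep B D ∧ Relation.ReflTransGen FStep C D) := by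
  have confluent_tm : ∀ {t u v : Tm}, ReflTransGen TStep t u → ReflTransGen TStep t v →
      Join (ReflTransGen TStep) u v :=
    join_of_normalizer Tm.norm TStep.norm_eq TStep.reflTransGen_norm
  have confluent_fm : ∀ {A B C : Fm}, ReflTransGen FStep A B → ReflTransGen FStep A C →
      Join (ReflTransGen FStep) B C :=
    join_of_normalizer Fm.norm FStep.norm_eq FStep.reflTransGen_norm
  refine ⟨fun _ _ _ h₁ h₂ => confluent_tm (.single h₁) (.single h₂),
    fun _ _ _ h₁ h₂ => confluent_fm (.single h₁) (.single h₂),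
    fun t => ⟨_, .refl, .single (.sC (.subNil t))⟩,
    fun t u => ⟨_, .refl, .head (.plusL (.subNil t)) (.single (.plusR (.subNil u)))⟩,
    fun t u => ⟨_, .refl, .head (.timesL (.subNil t)) (.single (.timesR (.subNil u)))⟩,
    fun _ _ _ => confluent_tm, fun _ _ _ => confluent_fm⟩
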